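/- For every type-preserving boundary strategy χ of Max, every strategy μ of Min in the closed region graph T̄, every ε > 0, every strategy χ_ε that is ε-close to χ, and every configuration q: A_Max(q,μ,χ_ε) ≥ A_Max(q,μ[q,χ_ε],χ) − ε, where μ[q,χ_ε] is any type-preserving boundary strategy of Min such that the run from q under (μ[q,χ_ε],χ) has the same type as the run from q under (μ,χ_ε). Symmetrically, for every type-preserving boundary strategy μ of Min, every strategy χ of Max in T̄, every ε > 0, every strategy μ_ε that is ε-close to μ, and every configuration q: A_Min(q,μ_ε,χ) ≤ A_Min(q,μ,χ[q,μ_ε]) + ε, where χ[q,μ_ε] is any type-preserving boundary strategy of Max such that the run from q under (μ,χ[q,μ_ε]) has the same type as the run from q under (μ_ε,χ). -/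

import Mathlib

noncomputable section

attribute [local instance] Classical.propDecidable

/-- A two-player (Min/Max) game arena with real-valued step costs. -/
structure Arena (Conf Move : Type) where
  Tr : Conf → Move → Conf → Prop
  cost : Conf → Move → ℝ
  IsMin : Conf → Prop

namespace Arena

variable {Conf Move : Type}

/-- A finite run in the arena. -/
structure FinRun (G : Arena Conf Move) where
  n : ℕ
  q : Fin (n + 1) → Conf
  m : Fin n → Move
  valid : ∀ i : Fin n, G.Tr (q i.castSucc) (m i) (q i.succ)

/-- The last configuration of a finite run. -/
def FinRun.last {G : Arena Conf Move} (r : G.FinRun) : Conf := r.q (Fin.last r.n)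

/-- The first configuration of a finite run. -/
def FinRun.first {G : Arena Conf Move} (r : G.FinRun) : Conf := r.q 0

/-- The trivial run consisting of a single configuration. -/
def single (G : Arena Conf Move) (q0 : Conf) : G.FinRun :=
  ⟨0, fun _ => q0, Fin.elim0, fun i => i.elim0⟩

/-- Extending a finite run by one transition. -/
def FinRun.extend {G : Arena Conf Move} (r : G.FinRun) (mv : Move) (q' : Conf)
    (h : G.Tr r.last mv q') : G.FinRun where
  n := r.n + 1
  q := Fin.snoc r.q q'
  m := Fin.snoc r.m mv
  valid := by
    intro i
    induction i using Fin.lastCases with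
    | last =>
        rw [Fin.snoc_castSucc, Fin.succ_last, Fin.snoc_last, Fin.snoc_last]
        exact h
    | cast j =>
        rw [Fin.succ_castSucc, Fin.snoc_castSucc, Fin.snoc_castSucc, Fin.snoc_castSucc]
        exact r.valid j

/-- Strategies of player Min: mappings from finite runs to moves that are
available whenever the last configuration belongs to Min. -/
def MinStrategy (G : Arena Conf Move) : Type :=
  {σ : G.FinRun → Move // ∀ r : G.FinRun, G.IsMin r.last → ∃ q', G.Tr r.last (σ r) q'}

/-- Strategies of player Max. -/
def MaxStrategy (G : Arena Conf Move) : Type :=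
  {σ : G.FinRun → Move // ∀ r : G.FinRun, ¬ G.IsMin r.last → ∃ q', G.Tr r.last (σ r) q'}

/-- A strategy is positional if its choice depends only on the last configuration. -/
def Positional {G : Arena Conf Move} (σ : G.FinRun → Move) : Prop :=
  ∀ r r' : G.FinRun, r.last = r'.last → σ r = σ r'

/-- The finite prefixes of the unique play from `q0` in which Min uses `μ`
and Max uses `χ`. -/
def play (G : Arena Conf Move) (μ : G.MinStrategy) (χ : G.MaxStrategy) (q0 : Conf) :
    ℕ → G.FinRun
  | 0 => G.single q0
  | n + 1 =>
    let r := G.play μ χ q0 n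
    if h : G.IsMin r.last then
      r.extend (μ.1 r) (Classical.choose (μ.2 r h)) (Classical.choose_spec (μ.2 r h))
    else
      r.extend (χ.1 r) (Classical.choose (χ.2 r h)) (Classical.choose_spec (χ.2 r h))

/-- Total cost (e.g. total time) of a finite run. -/
def FinRun.time {G : Arena Conf Move} (r : G.FinRun) : ℝ :=
  ∑ i : Fin r.n, G.cost (r.q i.castSucc) (r.m i)

/-- Payoff of player Min (to be minimised): limsup of average cost. -/
def AMin (G : Arena Conf Move) (q0 : Conf) (μ : G.MinStrategy) (χ : G.MaxStrategy) : ℝ :=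
  Filter.limsup (fun n : ℕ => (G.play μ χ q0 n).time / n) Filter.atTop

/-- Payoff of player Max (to be maximised): liminf of average cost. -/
def AMax (G : Arena Conf Move) (q0 : Conf) (μ : G.MinStrategy) (χ : G.MaxStrategy) : ℝ :=
  Filter.liminf (fun n : ℕ => (G.play μ χ q0 n).time / n) Filter.atTop

/-- Upper value of the game at `q0`. -/
def upperVal (G : Arena Conf Move) (q0 : Conf) : ℝ :=
  ⨅ μ : G.MinStrategy, ⨆ χ : G.MaxStrategy, G.AMin q0 μ χ

/-- Lower value of the game at `q0`. -/
def lowerVal (G : Arena Conf Move) (q0 : Conf) : ℝ :=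
  ⨆ χ : G.MaxStrategy, ⨅ μ : G.MinStrategy, G.AMax q0 μ χ

/-- The value of the game at `q0` (meaningful when the game is determined). -/
def val (G : Arena Conf Move) (q0 : Conf) : ℝ := G.upperVal q0

end Arena
/-- `k`-bounded clock valuations. -/
def IsVal (k : ℕ) {C : Type} (ν : C → ℝ) : Prop := ∀ c, 0 ≤ ν c ∧ ν c ≤ (k : ℝ)

/-- Two clock valuations satisfy exactly the same simple clock constraints
`c ⋈ i` and `c − c' ⋈ i` with `i ∈ {0,…,k}` and `⋈ ∈ {<,=,>}` (hence also ≤, ≥). -/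
def RegEq (k : ℕ) {C : Type} (ν ν' : C → ℝ) : Prop :=
  ∀ i : ℕ, i ≤ k → ∀ c c' : C,
    ((ν c < (i : ℝ) ↔ ν' c < (i : ℝ)) ∧ (ν c = (i : ℝ) ↔ ν' c = (i : ℝ)) ∧
      ((i : ℝ) < ν c ↔ (i : ℝ) < ν' c)) ∧
    ((ν c - ν c' < (i : ℝ) ↔ ν' c - ν' c' < (i : ℝ)) ∧
      (ν c - ν c' = (i : ℝ) ↔ ν' c - ν' c' = (i : ℝ)) ∧
      ((i : ℝ) < ν c - ν c' ↔ (i : ℝ) < ν' c - ν' c'))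

/-- An average-time game on a (bounded) timed automaton: a timed automaton
together with a partition of locations between players Min and Max. -/
structure TimedGame where
  L : Type
  C : Type
  A : Type
  finL : Finite L
  finC : Finite C
  finA : Finite A
  k : ℕ
  S : Set (L × (C → ℝ))
  En : A → Set (L × (C → ℝ))
  δ : L → A → L
  ϱ : A → Set C
  LMin : Set L
  bounded : ∀ s ∈ S, IsVal k s.2
  S_zone : (∀ (ℓ : L) (ν ν' : C → ℝ), RegEq k ν ν' → ((ℓ, ν) ∈ S ↔ (ℓ, ν') ∈ S)) ∧
    ∀ ℓ : L, Convex ℝ {ν : C → ℝ | (ℓ, ν) ∈ S}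
  En_sub : ∀ a, En a ⊆ S
  En_zone : ∀ a : A,
    (∀ (ℓ : L) (ν ν' : C → ℝ), RegEq k ν ν' → ((ℓ, ν) ∈ En a ↔ (ℓ, ν') ∈ En a)) ∧
    ∀ ℓ : L, Convex ℝ {ν : C → ℝ | (ℓ, ν) ∈ En a}
  nonstuck : ∀ s ∈ S, ∃ (t : ℝ) (a : A), 0 ≤ t ∧
    (∀ t', 0 ≤ t' → t' ≤ t → (s.1, fun c => s.2 c + t') ∈ S) ∧
    ((s.1, fun c => s.2 c + t) ∈ En a) ∧
    ((δ s.1 a, fun c => if c ∈ ϱ a then 0 else s.2 c + t) ∈ S)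

namespace TimedGame

/-- Configurations of the timed automaton. -/
abbrev Q (T : TimedGame) : Type := T.L × (T.C → ℝ)

/-- Resetting the clocks in `X` to zero. -/
def resetv (T : TimedGame) (ν : T.C → ℝ) (X : Set T.C) : T.C → ℝ :=
  fun c => if c ∈ X then 0 else ν c

/-- The successor configuration after the timed action `τ = (t, a)`. -/
def tsucc (T : TimedGame) (s : T.Q) (τ : ℝ × T.A) : T.Q :=
  (T.δ s.1 τ.2, T.resetv (fun c => s.2 c + τ.1) (T.ϱ τ.2))

/-- The transition relation `s →_τ s'` of the timed automaton. -/
def Trans (T : TimedGame) (s : T.Q) (τ : ℝ × T.A) (s' : T.Q) : Prop :=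
  0 ≤ τ.1 ∧ (∀ t', 0 ≤ t' → t' ≤ τ.1 → (s.1, fun c => s.2 c + t') ∈ T.S) ∧
  ((s.1, fun c => s.2 c + τ.1) ∈ T.En τ.2) ∧ s' = T.tsucc s τ ∧ s' ∈ T.S

/-- The game arena of the average-time game played on the timed automaton. -/
def taArena (T : TimedGame) : Arena {s : T.Q // s ∈ T.S} (ℝ × T.A) where
  Tr := fun s τ s' => T.Trans s.1 τ s'.1
  cost := fun _ τ => τ.1
  IsMin := fun s => s.1.1 ∈ T.LMin

/-- A clock region: an equivalence class of the region equivalence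
(restricted to `k`-bounded valuations). -/
def IsClockRegion (T : TimedGame) (P : Set (T.C → ℝ)) : Prop :=
  ∃ ν : T.C → ℝ, P = {ν' | IsVal T.k ν' ∧ RegEq T.k ν ν'}

/-- Regions: pairs of a location and a clock region. -/
def Region (T : TimedGame) : Type :=
  T.L × {P : Set (T.C → ℝ) // T.IsClockRegion P}

/-- The clock region of a valuation. -/
def clockRegionOf (T : TimedGame) (ν : T.C → ℝ) : {P : Set (T.C → ℝ) // T.IsClockRegion P} :=
  ⟨{ν' | IsVal T.k ν' ∧ RegEq T.k ν ν'}, ⟨ν, rfl⟩⟩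

/-- The region `[s]` of a configuration `s`. -/
def regionOf (T : TimedGame) (s : T.Q) : T.Region := (s.1, T.clockRegionOf s.2)

/-- The configurations `Ω` of the region graphs: pairs of a configuration
of the timed automaton and a region. -/
abbrev Omega (T : TimedGame) : Type := T.Q × T.Region

/-- `(s, (ℓ, P))` is a state of the closed region graph: the locations match
and `s`'s valuation lies in the closure of the clock region `P`. -/
def barS (T : TimedGame) (q : T.Omega) : Prop :=
  q.1.1 = q.2.1 ∧ q.1.2 ∈ closure q.2.2.1

/-- `(s, (ℓ, P))` is a state of the region graph: the locations match and
`s`'s valuation lies in the clock region `P`. -/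
def tildeS (T : TimedGame) (q : T.Omega) : Prop :=
  q.1.1 = q.2.1 ∧ q.1.2 ∈ q.2.2.1

/-- `R →_* R'` : the region `R'` is a time successor of `R`. -/
def timeSucc (T : TimedGame) (R R' : T.Region) : Prop :=
  R.1 = R'.1 ∧ ∀ ν ∈ R.2.1, ∃ t : ℝ, 0 ≤ t ∧
    (∀ t', 0 ≤ t' → t' ≤ t → (R.1, fun c => ν c + t') ∈ T.S) ∧
    (fun c => ν c + t) ∈ R'.2.1

/-- The discrete transition `s →^a s'` of the timed automaton. -/
def astep (T : TimedGame) (s : T.Q) (a : T.A) (s' : T.Q) : Prop :=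
  s ∈ T.S ∧ s' ∈ T.S ∧ s ∈ T.En a ∧ s' = (T.δ s.1 a, T.resetv s.2 (T.ϱ a))

/-- `R →^a R'` at the level of regions. -/
def regAct (T : TimedGame) (R : T.Region) (a : T.A) (R' : T.Region) : Prop :=
  ∃ ν ∈ R.2.1, ∃ ν' ∈ R'.2.1, T.astep (R.1, ν) a (R'.1, ν')

/-- Moves of the region graphs: a delay, an intermediate region, and an action. -/
abbrev RMove (T : TimedGame) : Type := ℝ × T.Region × T.A

/-- Transitions underlying pre-runs: `(s', R') = succ((s,R), (t,R'',a))` with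
`R →_* R'' →^a R'`. -/
def preTrans (T : TimedGame) (q : T.Omega) (m : T.RMove) (q' : T.Omega) : Prop :=
  0 ≤ m.1 ∧ T.timeSucc q.2 m.2.1 ∧ T.regAct m.2.1 m.2.2 q'.2 ∧
  q'.1 = T.tsucc q.1 (m.1, m.2.2)

/-- Labelled transitions of the closed region graph `T̄`. -/
def cTrans (T : TimedGame) (q : T.Omega) (m : T.RMove) (q' : T.Omega) : Prop :=
  T.preTrans q m q' ∧ T.barS q ∧ T.barS q' ∧
  (fun c => q.1.2 c + m.1) ∈ closure m.2.1.2.1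

/-- Labelled transitions of the boundary region graph `T̂`: additionally the
intermediate valuation lies on the boundary of the intermediate region. -/
def bTrans (T : TimedGame) (q : T.Omega) (m : T.RMove) (q' : T.Omega) : Prop :=
  T.cTrans q m q' ∧ (fun c => q.1.2 c + m.1) ∈ frontier m.2.1.2.1

/-- Labelled transitions of the region graph `T̃`. -/
def rTrans (T : TimedGame) (q : T.Omega) (m : T.RMove) (q' : T.Omega) : Prop :=
  T.preTrans q m q' ∧ T.tildeS q ∧ T.tildeS q' ∧
  (fun c => q.1.2 c + m.1) ∈ m.2.1.2.1

/-- The arena of pre-runs over `Ω`. -/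
def preArena (T : TimedGame) : Arena T.Omega T.RMove where
  Tr := T.preTrans
  cost := fun _ m => m.1
  IsMin := fun q => q.2.1 ∈ T.LMin

/-- Finite pre-runs. -/
abbrev PreRunF (T : TimedGame) : Type := (T.preArena).FinRun

/-- Pre-strategies of Min. -/
abbrev MinPre (T : TimedGame) : Type := (T.preArena).MinStrategy

/-- Pre-strategies of Max. -/
abbrev MaxPre (T : TimedGame) : Type := (T.preArena).MaxStrategy

/-- A pre-strategy of Min is a strategy in the closed region graph `T̄`
if it always waits into the closure of the chosen intermediate region. -/
def MinClosed (T : TimedGame) (μ : T.MinPre) : Prop :=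
  ∀ r : T.PreRunF,
    (fun c => (Arena.FinRun.last r).1.2 c + (μ.1 r).1) ∈ closure (μ.1 r).2.1.2.1

def MaxClosed (T : TimedGame) (χ : T.MaxPre) : Prop :=
  ∀ r : T.PreRunF,
    (fun c => (Arena.FinRun.last r).1.2 c + (χ.1 r).1) ∈ closure (χ.1 r).2.1.2.1

/-- Admissible strategies: strategies in the region graph `T̃`. -/
def MinAdmissible (T : TimedGame) (μ : T.MinPre) : Prop :=
  ∀ r : T.PreRunF,
    (fun c => (Arena.FinRun.last r).1.2 c + (μ.1 r).1) ∈ (μ.1 r).2.1.2.1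

def MaxAdmissible (T : TimedGame) (χ : T.MaxPre) : Prop :=
  ∀ r : T.PreRunF,
    (fun c => (Arena.FinRun.last r).1.2 c + (χ.1 r).1) ∈ (χ.1 r).2.1.2.1

/-- Boundary strategies of Min: the delay is the **infimum** of the delays
reaching the closure of the chosen intermediate region. -/
def MinBoundary (T : TimedGame) (μ : T.MinPre) : Prop :=
  ∀ r : T.PreRunF,
    (μ.1 r).1 = sInf {t : ℝ | 0 ≤ t ∧
      (fun c => (Arena.FinRun.last r).1.2 c + t) ∈ closure (μ.1 r).2.1.2.1}

/-- Boundary strategies of Max: the delay is the **supremum** of the delays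
reaching the closure of the chosen intermediate region. -/
def MaxBoundary (T : TimedGame) (χ : T.MaxPre) : Prop :=
  ∀ r : T.PreRunF,
    (χ.1 r).1 = sSup {t : ℝ | 0 ≤ t ∧
      (fun c => (Arena.FinRun.last r).1.2 c + t) ∈ closure (χ.1 r).2.1.2.1}

/-- The sequence of regions visited by a finite pre-run (its type, part 1). -/
def typeConfs (T : TimedGame) (r : T.PreRunF) : ℕ → Option T.Region :=
  fun i => if h : i < r.n + 1 then some ((r.q ⟨i, h⟩).2) else none

/-- The sequence of intermediate regions and actions of a finite pre-run
(its type, part 2). -/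
def typeMoves (T : TimedGame) (r : T.PreRunF) : ℕ → Option (T.Region × T.A) :=
  fun i => if h : i < r.n then some ((r.m ⟨i, h⟩).2) else none

/-- Two finite pre-runs have the same type. -/
def sameType (T : TimedGame) (r r' : T.PreRunF) : Prop :=
  T.typeConfs r = T.typeConfs r' ∧ T.typeMoves r = T.typeMoves r'

/-- The waiting time `t(s, α)` of the boundary timed action `α = (b, c, a)`. -/
def tOf (T : TimedGame) (s : T.Q) (α : ℕ × T.C × T.A) : ℝ :=
  if s.2 α.2.1 ≤ (α.1 : ℝ) then (α.1 : ℝ) - s.2 α.2.1 else 0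

/-- Type-preserving boundary strategies of Min: runs of the same type are
assigned the same intermediate region, action and boundary timed action. -/
def MinTP (T : TimedGame) (μ : T.MinPre) : Prop :=
  T.MinBoundary μ ∧
  ∀ r r' : T.PreRunF, T.sameType r r' →
    (μ.1 r).2 = (μ.1 r').2 ∧
    ∃ (b : ℕ) (c : T.C), b ≤ T.k ∧
      (μ.1 r).1 = T.tOf (Arena.FinRun.last r).1 (b, c, (μ.1 r).2.2) ∧
      (μ.1 r').1 = T.tOf (Arena.FinRun.last r').1 (b, c, (μ.1 r').2.2)

def MaxTP (T : TimedGame) (χ : T.MaxPre) : Prop :=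
  T.MaxBoundary χ ∧
  ∀ r r' : T.PreRunF, T.sameType r r' →
    (χ.1 r).2 = (χ.1 r').2 ∧
    ∃ (b : ℕ) (c : T.C), b ≤ T.k ∧
      (χ.1 r).1 = T.tOf (Arena.FinRun.last r).1 (b, c, (χ.1 r).2.2) ∧
      (χ.1 r').1 = T.tOf (Arena.FinRun.last r').1 (b, c, (χ.1 r').2.2)

/-- `μ_ε` is `ε`-close to the type-preserving boundary strategy `μ` of Min. -/
def EpsCloseMin (T : TimedGame) (μ με : T.MinPre) (ε : ℝ) : Prop :=
  ∀ r : T.PreRunF, (με.1 r).2 = (μ.1 r).2 ∧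
    (fun c => (Arena.FinRun.last r).1.2 c + (με.1 r).1) ∈ (μ.1 r).2.1.2.1 ∧
    (με.1 r).1 ≤ (μ.1 r).1 + ε

/-- `χ_ε` is `ε`-close to the type-preserving boundary strategy `χ` of Max. -/
def EpsCloseMax (T : TimedGame) (χ χε : T.MaxPre) (ε : ℝ) : Prop :=
  ∀ r : T.PreRunF, (χε.1 r).2 = (χ.1 r).2 ∧
    (fun c => (Arena.FinRun.last r).1.2 c + (χε.1 r).1) ∈ (χ.1 r).2.1.2.1 ∧
    (χ.1 r).1 - ε ≤ (χε.1 r).1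

/-- Upper value of the game on the subgraph of region graphs whose strategies
are the pre-strategies satisfying `PMin`, `PMax` respectively. -/
def upperG (T : TimedGame) (PMin : T.MinPre → Prop) (PMax : T.MaxPre → Prop)
    (q : T.Omega) : ℝ :=
  ⨅ μ : {μ : T.MinPre // PMin μ}, ⨆ χ : {χ : T.MaxPre // PMax χ},
    Arena.AMin T.preArena q μ.1 χ.1

/-- Lower value. -/
def lowerG (T : TimedGame) (PMin : T.MinPre → Prop) (PMax : T.MaxPre → Prop)
    (q : T.Omega) : ℝ :=
  ⨆ χ : {χ : T.MaxPre // PMax χ}, ⨅ μ : {μ : T.MinPre // PMin μ},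
    Arena.AMax T.preArena q μ.1 χ.1

def upperBar (T : TimedGame) : T.Omega → ℝ := T.upperG T.MinClosed T.MaxClosed
def lowerBar (T : TimedGame) : T.Omega → ℝ := T.lowerG T.MinClosed T.MaxClosed
/-- The value of the average-time game on the closed region graph `T̄`. -/
def valBar (T : TimedGame) : T.Omega → ℝ := T.upperBar

def upperHat (T : TimedGame) : T.Omega → ℝ := T.upperG T.MinBoundary T.MaxBoundary
def lowerHat (T : TimedGame) : T.Omega → ℝ := T.lowerG T.MinBoundary T.MaxBoundary
/-- The value of the average-time game on the boundary region graph `T̂`. -/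
def valHat (T : TimedGame) : T.Omega → ℝ := T.upperHat

def upperTilde (T : TimedGame) : T.Omega → ℝ := T.upperG T.MinAdmissible T.MaxAdmissible
def lowerTilde (T : TimedGame) : T.Omega → ℝ := T.lowerG T.MinAdmissible T.MaxAdmissible
/-- The value of the average-time game on the region graph `T̃`. -/
def valTilde (T : TimedGame) : T.Omega → ℝ := T.upperTilde

/-- A function is simple on a set `X` of configurations. -/
def SimpleOn (T : TimedGame) (X : Set T.Omega) (F : T.Omega → ℝ) : Prop :=
  (∃ e : ℤ, ∀ q ∈ X, F q = (e : ℝ)) ∨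
  (∃ (e : ℤ) (c : T.C), ∀ q ∈ X, F q = (e : ℝ) - q.1.2 c)

/-- A function on the configurations of the closed region graph is regionally
simple. -/
def RegionallySimple (T : TimedGame) (F : T.Omega → ℝ) : Prop :=
  ∀ R : T.Region, T.SimpleOn {q : T.Omega | T.barS q ∧ q.2 = R} F

/-- A function on the configurations of the closed region graph is regionally
constant. -/
def RegionallyConstant (T : TimedGame) (F : T.Omega → ℝ) : Prop :=
  ∀ R : T.Region, ∃ v : ℝ, ∀ q : T.Omega, T.barS q → q.2 = R → F q = v

/-- The configuration `(s, [s])` of the region graphs determined by a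
configuration `s` of the timed automaton. -/
def confOf (T : TimedGame) (s : T.Q) : T.Omega := (s, T.regionOf s)

/-- A region is thin if some clock has an integer value throughout its closure. -/
def Thin (T : TimedGame) (R : T.Region) : Prop :=
  ∃ c : T.C, ∀ ν ∈ closure R.2.1, ∃ m : ℤ, ν c = (m : ℝ)

/-- `R'` is the immediate time successor of `R`. -/
def ImmTimeSucc (T : TimedGame) (R R' : T.Region) : Prop :=
  R.1 = R'.1 ∧ ∀ ν ∈ R.2.1, ∃ ε : ℝ, 0 < ε ∧
    ∀ t : ℝ, 0 < t → t < ε → (fun c => ν c + t) ∈ R'.2.1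

end TimedGame

/-!
Run the two plays of the same type side by side: at every step they take the same edge, so they
reset the same clocks. One of them waits for the boundary delay `tOf s (b, c, a)`, which brings the
total elapsed time `τ` to `max τ (ρ + b)`, where `ρ` is the date of the last reset of clock `c`. The
other play's delay exceeds its own boundary delay by at least `-ε` (resp. at most `ε`): by
`ε`-closeness, or because a boundary delay is the infimum (resp. supremum) of the delays into the
closure of the common intermediate region. Since `max` is `1`-Lipschitz, the lags between the two
plays of the total time and of every reset date grow by at most `ε` per step, so after `n` steps the
total times differ by at most `n ε`. Dividing by `n` and passing to the `liminf` (resp. `limsup`)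
gives the claim; the averages are bounded since every delay of the compared play is at most `k`.
-/

open Filter

theorem liminf_le_liminf_add {ι : Type*} {f : Filter ι} [f.NeBot] {u v : ι → ℝ} {ε : ℝ}
    (h : ∀ᶠ i in f, u i ≤ v i + ε) (hu : f.IsBoundedUnder (· ≥ ·) u)
    (hv : f.IsBoundedUnder (· ≤ ·) v) : liminf u f ≤ liminf v f + ε := by
  obtain ⟨m, hm⟩ := hu
  obtain ⟨M, hM⟩ := hv
  rw [eventually_map] at hm hM
  have hv' : f.IsBoundedUnder (· ≥ ·) v := isBoundedUnder_of_eventually_ge (a := m - ε) <| by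
    filter_upwards [hm, h] with i hmi hi
    linarith
  have hvε : f.IsBoundedUnder (· ≤ ·) (v · + ε) := isBoundedUnder_of_eventually_le (a := M + ε) <|
    hM.mono fun i hi => by linarith
  rw [← liminf_add_const f v ε (isBoundedUnder_of_eventually_le hM).isCoboundedUnder_ge hv']
  exact liminf_le_liminf h ⟨m, hm⟩ hvε.isCoboundedUnder_ge

theorem limsup_le_limsup_add {ι : Type*} {f : Filter ι} [f.NeBot] {u v : ι → ℝ} {ε : ℝ}
    (h : ∀ᶠ i in f, u i ≤ v i + ε) (hu : f.IsBoundedUnder (· ≥ ·) u)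
    (hv : f.IsBoundedUnder (· ≤ ·) v) : limsup u f ≤ limsup v f + ε := by
  obtain ⟨m, hm⟩ := hu
  obtain ⟨M, hM⟩ := hv
  rw [eventually_map] at hm hM
  have hv' : f.IsBoundedUnder (· ≥ ·) v := isBoundedUnder_of_eventually_ge (a := m - ε) <| by
    filter_upwards [hm, h] with i hmi hi
    linarith
  have hvε : f.IsBoundedUnder (· ≤ ·) (v · + ε) := isBoundedUnder_of_eventually_le (a := M + ε) <|
    hM.mono fun i hi => by linarith
  rw [← limsup_add_const f v ε ⟨M, hM⟩ hv'.isCoboundedUnder_le]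
  exact limsup_le_limsup h (IsBoundedUnder.isCoboundedUnder_le ⟨m, hm⟩) hvε

theorem eventually_div_le_div_add {a b : ℕ → ℝ} {ε : ℝ} (h : ∀ n, a n ≤ b n + n * ε) :
    ∀ᶠ n : ℕ in atTop, a n / n ≤ b n / n + ε := by
  filter_upwards [eventually_gt_atTop 0] with n hn
  have hn' : (0 : ℝ) < n := Nat.cast_pos.mpr hn
  rw [div_add' _ _ _ hn'.ne', mul_comm]
  exact div_le_div_of_nonneg_right (h n) hn'.le

theorem isBoundedUnder_le_div {b : ℕ → ℝ} {K : ℝ} (hb : ∀ n, b n ≤ n * K) :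
    atTop.IsBoundedUnder (· ≤ ·) fun n : ℕ => b n / n :=
  isBoundedUnder_of_eventually_le (a := K) <| by
    filter_upwards [eventually_gt_atTop 0] with n hn
    rw [div_le_iff₀ (Nat.cast_pos.mpr hn), mul_comm]
    exact hb n

/-- Read `τ n` as the total elapsed time and `ρ n d` as the date of the last reset of clock `d`. -/
theorem le_add_mul_of_reset_steps {C : Type*} {ε : ℝ} (hε : 0 ≤ ε) {τ τ' : ℕ → ℝ}
    {ρ ρ' : ℕ → C → ℝ} (h₀ : τ 0 ≤ τ' 0) (hρ₀ : ∀ d, ρ 0 d ≤ ρ' 0 d)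
    (hstep : ∀ n, ∃ (X : Set C) (c : C) (b : ℝ),
      τ (n + 1) - max (τ n) (ρ n c + b) ≤ τ' (n + 1) - max (τ' n) (ρ' n c + b) + ε ∧
      (∀ d, ρ (n + 1) d = if d ∈ X then τ (n + 1) else ρ n d) ∧
      (∀ d, ρ' (n + 1) d = if d ∈ X then τ' (n + 1) else ρ' n d))
    (n : ℕ) : τ n ≤ τ' n + n * ε := by
  suffices h : τ n - τ' n ≤ n * ε ∧ ∀ d, ρ n d - ρ' n d ≤ n * ε by linarith [h.1]
  induction n with
  | zero => simpa using ⟨h₀, hρ₀⟩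
  | succ n ih =>
    obtain ⟨X, c, b, hτ, hρ, hρ'⟩ := hstep n
    have hmax := max_sub_max_le_max (τ n) (ρ n c + b) (τ' n) (ρ' n c + b)
    have hlag : max (τ n - τ' n) (ρ n c + b - (ρ' n c + b)) ≤ n * ε :=
      max_le ih.1 (by linarith [ih.2 c])
    have hτ' : τ (n + 1) - τ' (n + 1) ≤ (n + 1 : ℕ) * ε := by push_cast; linarith
    refine ⟨hτ', fun d => ?_⟩
    rw [hρ, hρ']
    split_ifs
    · exact hτ'
    · push_cast; linarith [ih.2 d]

namespace Arena

variable {Conf Move : Type} {G : Arena Conf Move}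

def nextMove (μ : G.MinStrategy) (χ : G.MaxStrategy) (r : G.FinRun) : Move :=
  if G.IsMin r.last then μ.1 r else χ.1 r

theorem nextMove_of_isMin {μ : G.MinStrategy} {χ : G.MaxStrategy} {r : G.FinRun}
    (h : G.IsMin r.last) : nextMove μ χ r = μ.1 r := if_pos h

theorem nextMove_of_not_isMin {μ : G.MinStrategy} {χ : G.MaxStrategy} {r : G.FinRun}
    (h : ¬ G.IsMin r.last) : nextMove μ χ r = χ.1 r := if_neg h

theorem FinRun.last_extend (r : G.FinRun) (m : Move) (q' : Conf) (h : G.Tr r.last m q') :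
    (r.extend m q' h).last = q' :=
  Fin.snoc_last (α := fun _ => Conf) ..

theorem FinRun.time_extend (r : G.FinRun) (m : Move) (q' : Conf) (h : G.Tr r.last m q') :
    (r.extend m q' h).time = r.time + G.cost r.last m := by
  change ∑ i : Fin (r.n + 1), G.cost ((Fin.snoc r.q q' : Fin (r.n + 2) → Conf) i.castSucc)
    ((Fin.snoc r.m m : Fin (r.n + 1) → Move) i) = r.time + G.cost r.last m
  rw [Fin.sum_univ_castSucc]
  simp only [Fin.snoc_castSucc, Fin.snoc_last, FinRun.time, FinRun.last]

variable (μ : G.MinStrategy) (χ : G.MaxStrategy) (q₀ : Conf)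

theorem play_succ (n : ℕ) : ∃ q' h, G.play μ χ q₀ (n + 1) =
    (G.play μ χ q₀ n).extend (nextMove μ χ (G.play μ χ q₀ n)) q' h := by
  by_cases hmin : G.IsMin (G.play μ χ q₀ n).last
  · rw [nextMove_of_isMin hmin]
    exact ⟨_, _, by rw [play, dif_pos hmin]⟩
  · rw [nextMove_of_not_isMin hmin]
    exact ⟨_, _, by rw [play, dif_neg hmin]⟩

theorem length_play (n : ℕ) : (G.play μ χ q₀ n).n = n := by
  induction n with
  | zero => rfl
  | succ n ih =>
    obtain ⟨q', h, hplay⟩ := play_succ μ χ q₀ n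
    rw [hplay]
    exact congrArg Nat.succ ih

theorem tr_play_succ (n : ℕ) :
    G.Tr (G.play μ χ q₀ n).last (nextMove μ χ (G.play μ χ q₀ n)) (G.play μ χ q₀ (n + 1)).last := by
  obtain ⟨q', h, hplay⟩ := play_succ μ χ q₀ n
  rwa [hplay, FinRun.last_extend]

theorem time_play_zero : (G.play μ χ q₀ 0).time = 0 :=
  Finset.sum_empty

theorem time_play_succ (n : ℕ) : (G.play μ χ q₀ (n + 1)).time =
    (G.play μ χ q₀ n).time + G.cost (G.play μ χ q₀ n).last (nextMove μ χ (G.play μ χ q₀ n)) := by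
  obtain ⟨q', h, hplay⟩ := play_succ μ χ q₀ n
  rw [hplay, FinRun.time_extend]

theorem time_play_nonneg (hcost : ∀ q m q', G.Tr q m q' → 0 ≤ G.cost q m) (n : ℕ) :
    0 ≤ (G.play μ χ q₀ n).time := by
  induction n with
  | zero => rw [time_play_zero]
  | succ n ih =>
    rw [time_play_succ]
    exact add_nonneg ih (hcost _ _ _ (tr_play_succ μ χ q₀ n))

theorem time_play_le {K : ℝ}
    (hK : ∀ n, G.cost (G.play μ χ q₀ n).last (nextMove μ χ (G.play μ χ q₀ n)) ≤ K) (n : ℕ) :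
    (G.play μ χ q₀ n).time ≤ n * K := by
  induction n with
  | zero => simp [time_play_zero]
  | succ n ih =>
    rw [time_play_succ]
    push_cast
    linarith [hK n]

end Arena

namespace TimedGame

variable {T : TimedGame}

theorem isVal_of_mem_closure {P : Set (T.C → ℝ)} (hP : T.IsClockRegion P) {ν : T.C → ℝ}
    (hν : ν ∈ closure P) : IsVal T.k ν := by
  obtain ⟨ν₀, rfl⟩ := hP
  have hclosed : IsClosed {ν : T.C → ℝ | IsVal T.k ν} := by
    simp only [IsVal, Set.ofPred_forall]
    exact isClosed_iInter fun c => isClosed_Icc.preimage (continuous_apply c)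
  exact closure_minimal (fun _ h => h.1) hclosed hν

theorem barS.valuation_nonneg {q : T.Omega} (hq : T.barS q) (c : T.C) : 0 ≤ q.1.2 c :=
  (isVal_of_mem_closure q.2.2.2 hq.2 c).1

theorem delay_le_of_mem_closure {P : Set (T.C → ℝ)} (hP : T.IsClockRegion P) {ν : T.C → ℝ}
    {t : ℝ} (hν : (fun c => ν c + t) ∈ closure P) (c : T.C) : t ≤ T.k - ν c := by
  linarith [(isVal_of_mem_closure hP hν c).2]

theorem add_tOf (τ : ℝ) (s : T.Q) (b : ℕ) (c : T.C) (a : T.A) :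
    τ + T.tOf s (b, c, a) = max τ (τ - s.2 c + b) := by
  unfold tOf
  split_ifs with h
  · rw [max_eq_right (by linarith)]; ring
  · rw [max_eq_left (by linarith), add_zero]

theorem tOf_le_k (s : T.Q) {b : ℕ} (c : T.C) (a : T.A) (hb : b ≤ T.k) (hs : 0 ≤ s.2 c) :
    T.tOf s (b, c, a) ≤ T.k := by
  have : (b : ℝ) ≤ T.k := by exact_mod_cast hb
  unfold tOf
  split_ifs <;> linarith

theorem MinBoundary.delay_le {μ : T.MinPre} (hμ : T.MinBoundary μ) (r : T.PreRunF) {t : ℝ}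
    (ht : 0 ≤ t) (hmem : (fun c => r.last.1.2 c + t) ∈ closure (μ.1 r).2.1.2.1) :
    (μ.1 r).1 ≤ t := by
  rw [hμ r]
  exact csInf_le ⟨0, fun _ hu => hu.1⟩ ⟨ht, hmem⟩

theorem MaxBoundary.le_delay {χ : T.MaxPre} (hχ : T.MaxBoundary χ) (r : T.PreRunF) (c : T.C)
    {t : ℝ} (ht : 0 ≤ t) (hmem : (fun c => r.last.1.2 c + t) ∈ closure (χ.1 r).2.1.2.1) :
    t ≤ (χ.1 r).1 := by
  rw [hχ r]
  exact le_csSup ⟨_, fun _ hu => delay_le_of_mem_closure (χ.1 r).2.1.2.2 hu.2 c⟩ ⟨ht, hmem⟩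

/-- `MinTP μ` and `MaxTP χ` unfold to the boundary condition together with `TypePreserving` of
`μ.1`, resp. `χ.1`. -/
def TypePreserving (T : TimedGame) (σ : T.PreRunF → T.RMove) : Prop :=
  ∀ r r' : T.PreRunF, T.sameType r r' →
    (σ r).2 = (σ r').2 ∧
    ∃ (b : ℕ) (c : T.C), b ≤ T.k ∧
      (σ r).1 = T.tOf (Arena.FinRun.last r).1 (b, c, (σ r).2.2) ∧
      (σ r').1 = T.tOf (Arena.FinRun.last r').1 (b, c, (σ r').2.2)

theorem typeMoves_extend (r : T.PreRunF) (m : T.RMove) (q' : T.Omega)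
    (h : T.preArena.Tr r.last m q') : T.typeMoves (r.extend m q' h) r.n = some m.2 := by
  rw [typeMoves, dif_pos (show r.n < (r.extend m q' h).n from r.n.lt_succ_self)]
  exact congrArg (some ·.2) (Fin.snoc_last (α := fun _ => T.RMove) ..)

theorem sameType.symm {r r' : T.PreRunF} (h : T.sameType r r') : T.sameType r' r :=
  ⟨h.1.symm, h.2.symm⟩

theorem typeConfs_length (r : T.PreRunF) : T.typeConfs r r.n = some r.last.2 :=
  dif_pos r.n.lt_succ_self

theorem sameType.length_eq {r r' : T.PreRunF} (h : T.sameType r r') : r.n = r'.n := by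
  have h₁ := congrFun h.1 r.n
  have h₂ := congrFun h.1 r'.n
  rw [typeConfs_length] at h₁
  rw [typeConfs_length] at h₂
  unfold typeConfs at h₁ h₂
  split_ifs at h₁ h₂; omega

theorem sameType.region_last_eq {r r' : T.PreRunF} (h : T.sameType r r') :
    r.last.2 = r'.last.2 := by
  have h₁ := congrFun h.1 r.n
  rwa [typeConfs_length, h.length_eq, typeConfs_length, Option.some_inj] at h₁

theorem sameType.isMin_iff {r r' : T.PreRunF} (h : T.sameType r r') :
    T.preArena.IsMin r.last ↔ T.preArena.IsMin r'.last := by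
  change r.last.2.1 ∈ T.LMin ↔ r'.last.2.1 ∈ T.LMin
  rw [h.region_last_eq]

section Play

variable (μ : T.MinPre) (χ : T.MaxPre) (q : T.Omega)

variable (T) in
def delay (n : ℕ) : ℝ := (Arena.nextMove μ χ (T.preArena.play μ χ q n)).1

theorem typeMoves_play_succ (n : ℕ) : T.typeMoves (T.preArena.play μ χ q (n + 1)) n =
    some (Arena.nextMove μ χ (T.preArena.play μ χ q n)).2 := by
  obtain ⟨q', h, hplay⟩ := Arena.play_succ μ χ q n
  have h' := typeMoves_extend _ _ _ h
  rwa [Arena.length_play, ← hplay] at h'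

theorem time_play_succ (n : ℕ) :
    (T.preArena.play μ χ q (n + 1)).time = (T.preArena.play μ χ q n).time + T.delay μ χ q n :=
  Arena.time_play_succ μ χ q n

theorem time_play_nonneg (n : ℕ) : 0 ≤ (T.preArena.play μ χ q n).time :=
  Arena.time_play_nonneg μ χ q (fun _ _ _ h => h.1) n

theorem delay_nonneg (n : ℕ) : 0 ≤ T.delay μ χ q n :=
  (Arena.tr_play_succ μ χ q n).1

theorem valuation_play_succ (n : ℕ) : (T.preArena.play μ χ q (n + 1)).last.1.2 =
    T.resetv (fun c => (T.preArena.play μ χ q n).last.1.2 c + T.delay μ χ q n)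
      (T.ϱ (Arena.nextMove μ χ (T.preArena.play μ χ q n)).2.2) := by
  rw [(Arena.tr_play_succ μ χ q n).2.2.2]
  rfl

theorem valuation_play_nonneg (hq : ∀ c, 0 ≤ q.1.2 c) (n : ℕ) (c : T.C) :
    0 ≤ (T.preArena.play μ χ q n).last.1.2 c := by
  induction n generalizing c with
  | zero => exact hq c
  | succ n ih =>
    rw [valuation_play_succ]
    unfold resetv
    split_ifs
    · exact le_rfl
    · exact add_nonneg (ih c) (delay_nonneg μ χ q n)

theorem resetDate_play_succ (n : ℕ) (d : T.C) :
    (T.preArena.play μ χ q (n + 1)).time - (T.preArena.play μ χ q (n + 1)).last.1.2 d =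
      if d ∈ T.ϱ (Arena.nextMove μ χ (T.preArena.play μ χ q n)).2.2 then
        (T.preArena.play μ χ q (n + 1)).time
      else (T.preArena.play μ χ q n).time - (T.preArena.play μ χ q n).last.1.2 d := by
  rw [valuation_play_succ]
  unfold resetv
  split_ifs
  · ring
  · rw [time_play_succ]; ring

end Play

theorem label_nextMove_eq_of_sameType {μ₁ μ₂ : T.MinPre} {χ₁ χ₂ : T.MaxPre} {q : T.Omega} {n : ℕ}
    (h : T.sameType (T.preArena.play μ₁ χ₁ q (n + 1)) (T.preArena.play μ₂ χ₂ q (n + 1))) :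
    (Arena.nextMove μ₁ χ₁ (T.preArena.play μ₁ χ₁ q n)).2 =
      (Arena.nextMove μ₂ χ₂ (T.preArena.play μ₂ χ₂ q n)).2 := by
  have h₂ := congrFun h.2 n
  rwa [typeMoves_play_succ, typeMoves_play_succ, Option.some_inj] at h₂

theorem time_play_le_of_sameType {μ₁ μ₂ : T.MinPre} {χ₁ χ₂ : T.MaxPre} {q : T.Omega} {ε : ℝ}
    (hε : 0 ≤ ε)
    (hsame : ∀ n, T.sameType (T.preArena.play μ₁ χ₁ q n) (T.preArena.play μ₂ χ₂ q n))
    (hdelay : ∀ n, ∃ (b : ℕ) (c : T.C) (a a' : T.A),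
      T.delay μ₁ χ₁ q n - T.tOf (T.preArena.play μ₁ χ₁ q n).last.1 (b, c, a) ≤
        T.delay μ₂ χ₂ q n - T.tOf (T.preArena.play μ₂ χ₂ q n).last.1 (b, c, a') + ε)
    (n : ℕ) :
    (T.preArena.play μ₁ χ₁ q n).time ≤ (T.preArena.play μ₂ χ₂ q n).time + n * ε := by
  refine le_add_mul_of_reset_steps hε (τ := fun n => (T.preArena.play μ₁ χ₁ q n).time)
    (τ' := fun n => (T.preArena.play μ₂ χ₂ q n).time)
    (ρ := fun n d => (T.preArena.play μ₁ χ₁ q n).time - (T.preArena.play μ₁ χ₁ q n).last.1.2 d)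
    (ρ' := fun n d => (T.preArena.play μ₂ χ₂ q n).time - (T.preArena.play μ₂ χ₂ q n).last.1.2 d)
    ?_ ?_ ?_ n
  · rw [Arena.time_play_zero, Arena.time_play_zero]
  · exact fun _ => le_rfl
  intro n
  obtain ⟨b, c, a, a', h⟩ := hdelay n
  have hX := congrArg (T.ϱ ·.2) (label_nextMove_eq_of_sameType (hsame (n + 1)))
  refine ⟨_, c, b, ?_, resetDate_play_succ μ₁ χ₁ q n, hX ▸ resetDate_play_succ μ₂ χ₂ q n⟩
  rw [time_play_succ, time_play_succ, ← add_tOf _ _ _ _ a, ← add_tOf _ _ _ _ a']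
  linarith

theorem exists_delay_sub_tOf_le_of_epsCloseMax {μ μ' : T.MinPre} {χ χε : T.MaxPre} {q : T.Omega}
    {ε : ℝ} (hε : 0 ≤ ε) (hμ' : T.MinTP μ') (hχ : T.TypePreserving χ.1) (hμ : T.MinClosed μ)
    (hχε : T.EpsCloseMax χ χε ε) (hq : ∀ c, 0 ≤ q.1.2 c)
    (hsame : ∀ n, T.sameType (T.preArena.play μ' χ q n) (T.preArena.play μ χε q n)) (n : ℕ) :
    ∃ (b : ℕ) (c : T.C) (a a' : T.A),
      T.delay μ' χ q n - T.tOf (T.preArena.play μ' χ q n).last.1 (b, c, a) ≤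
        T.delay μ χε q n - T.tOf (T.preArena.play μ χε q n).last.1 (b, c, a') + ε ∧
      T.delay μ χε q n ≤ T.k := by
  set p₁ := T.preArena.play μ' χ q n
  set p₂ := T.preArena.play μ χε q n
  have hst : T.sameType p₁ p₂ := hsame n
  have hν := valuation_play_nonneg μ χε q hq n
  by_cases hmin : T.preArena.IsMin p₁.last
  · have hmin₂ := hst.isMin_iff.1 hmin
    have hlab := label_nextMove_eq_of_sameType (hsame (n + 1))
    rw [Arena.nextMove_of_isMin hmin, Arena.nextMove_of_isMin hmin₂] at hlab
    have hd₁ : T.delay μ' χ q n = (μ'.1 p₁).1 := by rw [delay, Arena.nextMove_of_isMin hmin]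
    have hd₂ : T.delay μ χε q n = (μ.1 p₂).1 := by rw [delay, Arena.nextMove_of_isMin hmin₂]
    obtain ⟨hlab', b, c, -, h₁, h₂⟩ := hμ'.2 p₁ p₂ hst
    have hle : (μ'.1 p₂).1 ≤ (μ.1 p₂).1 :=
      hμ'.1.delay_le p₂ (hd₂ ▸ delay_nonneg μ χε q n) (by rw [← hlab', hlab]; exact hμ p₂)
    refine ⟨b, c, _, _, by linarith, ?_⟩
    linarith [delay_le_of_mem_closure (μ.1 p₂).2.1.2.2 (hμ p₂) c, hν c]
  · have hmin₂ := mt hst.isMin_iff.2 hmin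
    have hd₁ : T.delay μ' χ q n = (χ.1 p₁).1 := by rw [delay, Arena.nextMove_of_not_isMin hmin]
    have hd₂ : T.delay μ χε q n = (χε.1 p₂).1 := by rw [delay, Arena.nextMove_of_not_isMin hmin₂]
    obtain ⟨-, b, c, -, h₁, h₂⟩ := hχ p₁ p₂ hst
    obtain ⟨-, hmem, hge⟩ := hχε p₂
    refine ⟨b, c, _, _, by linarith, ?_⟩
    linarith [delay_le_of_mem_closure (χ.1 p₂).2.1.2.2 (subset_closure hmem) c, hν c]

theorem exists_delay_sub_tOf_le_of_epsCloseMin {μ με : T.MinPre} {χ χ' : T.MaxPre} {q : T.Omega}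
    {ε : ℝ} (hε : 0 ≤ ε) (hμ : T.TypePreserving μ.1) (hχ : T.MaxClosed χ)
    (hμε : T.EpsCloseMin μ με ε) (hχ' : T.MaxTP χ') (hq : ∀ c, 0 ≤ q.1.2 c)
    (hsame : ∀ n, T.sameType (T.preArena.play μ χ' q n) (T.preArena.play με χ q n)) (n : ℕ) :
    ∃ (b : ℕ) (c : T.C) (a a' : T.A),
      T.delay με χ q n - T.tOf (T.preArena.play με χ q n).last.1 (b, c, a) ≤
        T.delay μ χ' q n - T.tOf (T.preArena.play μ χ' q n).last.1 (b, c, a') + ε ∧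
      T.delay μ χ' q n ≤ T.k := by
  set p₁ := T.preArena.play με χ q n
  set p₂ := T.preArena.play μ χ' q n
  have hst : T.sameType p₂ p₁ := hsame n
  have hν := valuation_play_nonneg μ χ' q hq n
  by_cases hmin : T.preArena.IsMin p₁.last
  · have hmin₂ := hst.isMin_iff.2 hmin
    have hd₁ : T.delay με χ q n = (με.1 p₁).1 := by rw [delay, Arena.nextMove_of_isMin hmin]
    have hd₂ : T.delay μ χ' q n = (μ.1 p₂).1 := by rw [delay, Arena.nextMove_of_isMin hmin₂]
    obtain ⟨-, b, c, hb, h₂, h₁⟩ := hμ p₂ p₁ hst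
    obtain ⟨-, -, hle⟩ := hμε p₁
    refine ⟨b, c, _, _, by linarith, ?_⟩
    rw [hd₂, h₂]
    exact tOf_le_k _ c _ hb (hν c)
  · have hmin₂ := mt hst.isMin_iff.1 hmin
    have hlab := label_nextMove_eq_of_sameType (hsame (n + 1))
    rw [Arena.nextMove_of_not_isMin hmin, Arena.nextMove_of_not_isMin hmin₂] at hlab
    have hd₁ : T.delay με χ q n = (χ.1 p₁).1 := by rw [delay, Arena.nextMove_of_not_isMin hmin]
    have hd₂ : T.delay μ χ' q n = (χ'.1 p₂).1 := by rw [delay, Arena.nextMove_of_not_isMin hmin₂]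
    obtain ⟨hlab', b, c, hb, h₂, h₁⟩ := hχ'.2 p₂ p₁ hst
    have hle : (χ.1 p₁).1 ≤ (χ'.1 p₁).1 :=
      hχ'.1.le_delay p₁ c (hd₁ ▸ delay_nonneg με χ q n) (by rw [← hlab', hlab]; exact hχ p₁)
    refine ⟨b, c, _, _, by linarith, ?_⟩
    rw [hd₂, h₂]
    exact tOf_le_k _ c _ hb (hν c)

theorem avg_time_play_le_of_sameType {μ₁ μ₂ : T.MinPre} {χ₁ χ₂ : T.MaxPre} {q : T.Omega}
    {ε : ℝ} (hε : 0 ≤ ε)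
    (hsame : ∀ n, T.sameType (T.preArena.play μ₁ χ₁ q n) (T.preArena.play μ₂ χ₂ q n))
    (hstep : ∀ n, ∃ (b : ℕ) (c : T.C) (a a' : T.A),
      T.delay μ₁ χ₁ q n - T.tOf (T.preArena.play μ₁ χ₁ q n).last.1 (b, c, a) ≤
        T.delay μ₂ χ₂ q n - T.tOf (T.preArena.play μ₂ χ₂ q n).last.1 (b, c, a') + ε ∧
      T.delay μ₂ χ₂ q n ≤ T.k) :
    (∀ᶠ n : ℕ in atTop, (T.preArena.play μ₁ χ₁ q n).time / n ≤
      (T.preArena.play μ₂ χ₂ q n).time / n + ε) ∧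
    atTop.IsBoundedUnder (· ≥ ·) (fun n : ℕ => (T.preArena.play μ₁ χ₁ q n).time / n) ∧
    atTop.IsBoundedUnder (· ≤ ·) (fun n : ℕ => (T.preArena.play μ₂ χ₂ q n).time / n) := by
  have hdelay n : ∃ (b : ℕ) (c : T.C) (a a' : T.A),
      T.delay μ₁ χ₁ q n - T.tOf (T.preArena.play μ₁ χ₁ q n).last.1 (b, c, a) ≤
        T.delay μ₂ χ₂ q n - T.tOf (T.preArena.play μ₂ χ₂ q n).last.1 (b, c, a') + ε :=
    let ⟨b, c, a, a', h, _⟩ := hstep n; ⟨b, c, a, a', h⟩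
  have hbound n : T.delay μ₂ χ₂ q n ≤ T.k := let ⟨_, _, _, _, _, h⟩ := hstep n; h
  exact ⟨eventually_div_le_div_add (time_play_le_of_sameType hε hsame hdelay),
    isBoundedUnder_of_eventually_ge (a := 0) <| .of_forall fun n =>
      div_nonneg (time_play_nonneg μ₁ χ₁ q n) n.cast_nonneg,
    isBoundedUnder_le_div (Arena.time_play_le μ₂ χ₂ q hbound)⟩

end TimedGame

/-- Playing a type-matching type-preserving boundary strategy against the
unperturbed opponent loses at most `ε` compared to playing against an
`ε`-close perturbation. -/
theorem boundary_better_against_epsilon (T : TimedGame) :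
    (∀ χ : T.MaxPre, T.MaxTP χ → ∀ μ : T.MinPre, T.MinClosed μ →
      ∀ ε : ℝ, 0 < ε → ∀ χε : T.MaxPre, T.EpsCloseMax χ χε ε →
      ∀ q : T.Omega, T.barS q → ∀ μ' : T.MinPre, T.MinTP μ' →
      (∀ n : ℕ, T.sameType (Arena.play T.preArena μ' χ q n)
        (Arena.play T.preArena μ χε q n)) →
      Arena.AMax T.preArena q μ' χ - ε ≤ Arena.AMax T.preArena q μ χε) ∧
    (∀ μ : T.MinPre, T.MinTP μ → ∀ χ : T.MaxPre, T.MaxClosed χ →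
      ∀ ε : ℝ, 0 < ε → ∀ με : T.MinPre, T.EpsCloseMin μ με ε →
      ∀ q : T.Omega, T.barS q → ∀ χ' : T.MaxPre, T.MaxTP χ' →
      (∀ n : ℕ, T.sameType (Arena.play T.preArena μ χ' q n)
        (Arena.play T.preArena με χ q n)) →
      Arena.AMin T.preArena q με χ ≤ Arena.AMin T.preArena q μ χ' + ε) := by
  refine ⟨fun χ hχ μ hμ ε hε χε hχε q hq μ' hμ' hsame => ?_,
    fun μ hμ χ hχ ε hε με hμε q hq χ' hχ' hsame => ?_⟩
  · obtain ⟨hle, hbdd₁, hbdd₂⟩ := TimedGame.avg_time_play_le_of_sameType hε.le hsame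
      (TimedGame.exists_delay_sub_tOf_le_of_epsCloseMax hε.le hμ' hχ.2 hμ hχε
        hq.valuation_nonneg hsame)
    exact sub_le_iff_le_add.2 (liminf_le_liminf_add hle hbdd₁ hbdd₂)
  · obtain ⟨hle, hbdd₁, hbdd₂⟩ := TimedGame.avg_time_play_le_of_sameType hε.le
      (fun n => (hsame n).symm)
      (TimedGame.exists_delay_sub_tOf_le_of_epsCloseMin hε.le hμ.2 hχ hμε hχ'
        hq.valuation_nonneg hsame)
    exact limsup_le_limsup_add hle hbdd₁ hbdd₂
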